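/- In an infinite Fort transformation group (F,G) with a G-invariant ideal I on G (i.e., A ∈ I and s ∈ G imply As ∈ I), the asymptotic pairs modulo I are exactly: the diagonal, pairs (x,y) with st(x) ∪ st(y) ∈ I, pairs (x,b) with st(x) ∈ I, and pairs (b,y) with st(y) ∈ I. -/

import Mathlib

open Pointwise

/-!
A pair `(x, y)` with `x ≠ y` leaves the entourage `α_D` exactly when one of its points lands in
`D`, so asymptoticity modulo `I` amounts to `{g | g • z ∈ D} ∈ I` for `z = x, y` and every finite
`D ∌ b`. For `z = b` this set is empty; otherwise taking `D = {z}` shows that `st(z) ∈ I` is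
necessary, and it is sufficient because `{g | g • z ∈ D}` is a finite union of left cosets of
`st(z)`, which lie in `I` by invariance.
-/

/-- An ideal on (the carrier of) a group `G`. -/
def IsIdealOn {G : Type*} (I : Set (Set G)) : Prop :=
  I.Nonempty ∧ (∀ A ∈ I, ∀ B : Set G, B ⊆ A → B ∈ I) ∧ ∀ A ∈ I, ∀ B ∈ I, A ∪ B ∈ I

/-- The basic entourage `α_D = ((F∖D) × (F∖D)) ∪ Δ_D` of the Fort uniformity. -/
def fortEntourage (F : Type*) (D : Set F) : Set (F × F) :=
  (Dᶜ ×ˢ Dᶜ) ∪ {p : F × F | p.1 ∈ D ∧ p.1 = p.2}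

/-- Asymptoticity modulo an ideal `I` in a Fort transformation group `(F,G)`, expressed via
the generating entourages `α_D` (finite `D ⊆ F∖{b}`) of the unique uniformity of the Fort
space `F` with particular point `b`. -/
def FortAsymMod (G F : Type*) [SMul G F] (b : F) (I : Set (Set G)) (x y : F) : Prop :=
  ∀ D : Set F, D.Finite → b ∉ D → {g : G | (g • x, g • y) ∉ fortEntourage F D} ∈ I

namespace IsIdealOn

variable {G : Type*} {I : Set (Set G)}

theorem empty_mem (hI : IsIdealOn I) : (∅ : Set G) ∈ I :=
  hI.2.1 _ hI.1.some_mem _ (Set.empty_subset _)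

theorem mem_of_subset (hI : IsIdealOn I) {A B : Set G} (hA : A ∈ I) (hBA : B ⊆ A) : B ∈ I :=
  hI.2.1 A hA B hBA

theorem union_mem_iff (hI : IsIdealOn I) {A B : Set G} : A ∪ B ∈ I ↔ A ∈ I ∧ B ∈ I :=
  ⟨fun h => ⟨hI.mem_of_subset h Set.subset_union_left, hI.mem_of_subset h Set.subset_union_right⟩,
    fun h => hI.2.2 A h.1 B h.2⟩

theorem biUnion_mem {ι : Type*} (hI : IsIdealOn I) {s : Set ι} (hs : s.Finite) {f : ι → Set G}
    (hf : ∀ i ∈ s, f i ∈ I) : ⋃ i ∈ s, f i ∈ I := by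
  induction s, hs using Set.Finite.induction_on with
  | empty => simpa using hI.empty_mem
  | @insert i s _ _ ih =>
    rw [Set.biUnion_insert]
    exact hI.union_mem_iff.2
      ⟨hf i (Set.mem_insert i s), ih fun j hj => hf j (Set.mem_insert_of_mem i hj)⟩

end IsIdealOn

section Fort

variable {F : Type*}

theorem mk_mem_fortEntourage_self (D : Set F) (u : F) : (u, u) ∈ fortEntourage F D := by
  by_cases hu : u ∈ D
  · exact Or.inr ⟨hu, rfl⟩
  · exact Or.inl ⟨hu, hu⟩

theorem mk_mem_fortEntourage_iff_of_ne {D : Set F} {u v : F} (huv : u ≠ v) :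
    (u, v) ∈ fortEntourage F D ↔ u ∉ D ∧ v ∉ D := by
  simp [fortEntourage, huv]

theorem fortAsymMod_self {G : Type*} [SMul G F] {I : Set (Set G)} (hI : IsIdealOn I) (b x : F) :
    FortAsymMod G F b I x x := by
  intro D _ _
  simpa [mk_mem_fortEntourage_self] using hI.empty_mem

variable {G : Type*} [Group G] [MulAction G F]

theorem setOf_smul_eq_eq_smul_stabilizer {z d : F} {g₀ : G} (hg₀ : g₀ • z = d) :
    {g : G | g • z = d} = g₀ • (MulAction.stabilizer G z : Set G) := by
  ext g
  simp [Set.mem_smul_set_iff_inv_smul_mem, mul_smul, inv_smul_eq_iff, hg₀]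

variable {I : Set (Set G)}

theorem setOf_smul_mem_mem_of_stabilizer_mem (hI : IsIdealOn I)
    (hinv : ∀ A ∈ I, ∀ g : G, g • A ∈ I) {z : F} (hz : (MulAction.stabilizer G z : Set G) ∈ I)
    {D : Set F} (hD : D.Finite) : {g : G | g • z ∈ D} ∈ I := by
  have hfiber (d : F) : {g : G | g • z = d} ∈ I := by
    by_cases hd : ∃ g₀ : G, g₀ • z = d
    · obtain ⟨g₀, hg₀⟩ := hd
      rw [setOf_smul_eq_eq_smul_stabilizer hg₀]
      exact hinv _ hz g₀
    · convert hI.empty_mem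
      exact Set.eq_empty_of_forall_notMem fun g hg => hd ⟨g, hg⟩
  have hunion : {g : G | g • z ∈ D} = ⋃ d ∈ D, {g : G | g • z = d} := by ext; simp
  rw [hunion]
  exact hI.biUnion_mem hD fun d _ => hfiber d

theorem forall_setOf_smul_mem_mem_iff {b : F} (hb : ∀ g : G, g • b = b) (hI : IsIdealOn I)
    (hinv : ∀ A ∈ I, ∀ g : G, g • A ∈ I) (z : F) :
    (∀ D : Set F, D.Finite → b ∉ D → {g : G | g • z ∈ D} ∈ I) ↔
      z = b ∨ (MulAction.stabilizer G z : Set G) ∈ I := by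
  constructor
  · intro h
    refine or_iff_not_imp_left.2 fun hzb => ?_
    convert h {z} (Set.finite_singleton z) (Ne.symm hzb)
    ext g
    simp
  · rintro (rfl | hz) D hD hbD
    · simpa [hb, hbD] using hI.empty_mem
    · exact setOf_smul_mem_mem_of_stabilizer_mem hI hinv hz hD

theorem fortAsymMod_iff_of_ne {b : F} (hb : ∀ g : G, g • b = b) (hI : IsIdealOn I)
    (hinv : ∀ A ∈ I, ∀ g : G, g • A ∈ I) {x y : F} (hxy : x ≠ y) :
    FortAsymMod G F b I x y ↔
      (x = b ∨ (MulAction.stabilizer G x : Set G) ∈ I) ∧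
        (y = b ∨ (MulAction.stabilizer G y : Set G) ∈ I) := by
  have hleave (D : Set F) :
      {g : G | (g • x, g • y) ∉ fortEntourage F D} = {g | g • x ∈ D} ∪ {g | g • y ∈ D} := by
    ext g
    simp [mk_mem_fortEntourage_iff_of_ne ((MulAction.injective g).ne hxy), or_iff_not_imp_left]
  simp only [FortAsymMod, hleave, hI.union_mem_iff, forall_and,
    ← forall_setOf_smul_mem_mem_iff hb hI hinv]

end Fort

theorem stmt14_general {F G : Type*} [Group G] [MulAction G F] (b : F)
    (hb : ∀ g : G, g • b = b)
    (I : Set (Set G)) (hI : IsIdealOn I) (hinv : ∀ A ∈ I, ∀ g : G, g • A ∈ I) :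
    ∀ x y : F, FortAsymMod G F b I x y ↔
      (x = y ∨
       (x ≠ b ∧ y ≠ b ∧
         ((MulAction.stabilizer G x : Set G) ∪ (MulAction.stabilizer G y : Set G)) ∈ I) ∨
       (y = b ∧ (MulAction.stabilizer G x : Set G) ∈ I) ∨
       (x = b ∧ (MulAction.stabilizer G y : Set G) ∈ I)) := by
  intro x y
  rcases eq_or_ne x y with rfl | hxy
  · simpa using fortAsymMod_self hI b x
  · have hxy_b : x = b → y ≠ b := fun hx hy => hxy (hx.trans hy.symm)
    rw [fortAsymMod_iff_of_ne hb hI hinv hxy, hI.union_mem_iff]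
    tauto

/-- In an infinite Fort transformation group `(F,G)` with a `G`-invariant ideal `I` on `G`
(closed under translation), the pairs asymptotic modulo `I` are exactly: the diagonal, the
pairs `(x,y)` with `x,y ≠ b` and `st(x) ∪ st(y) ∈ I`, the pairs `(x,b)` with `st(x) ∈ I`,
and the pairs `(b,y)` with `st(y) ∈ I`. -/
theorem stmt14 {F G : Type*} [Group G] [MulAction G F] (b : F) (hF : Infinite F)
    (hb : ∀ g : G, g • b = b)
    (I : Set (Set G)) (hI : IsIdealOn I) (hinv : ∀ A ∈ I, ∀ g : G, g • A ∈ I) :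
    ∀ x y : F, FortAsymMod G F b I x y ↔
      (x = y ∨
       (x ≠ b ∧ y ≠ b ∧
         ((MulAction.stabilizer G x : Set G) ∪ (MulAction.stabilizer G y : Set G)) ∈ I) ∨
       (y = b ∧ (MulAction.stabilizer G x : Set G) ∈ I) ∨
       (x = b ∧ (MulAction.stabilizer G y : Set G) ∈ I)) :=
  stmt14_general b hb I hI hinv
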